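/- Let g: ℝ → ℝ be weakly differentiable with E|g'(x₀ + σU)| < ∞ where U ~ N(0,1), and let x̃ = x₀ + σU for fixed x₀ ∈ ℝ. Then E[(g(x̃) − x₀)²] = E[(g(x̃) − x̃)²] − σ² + 2σ² E[g'(x̃)]. -/

import Mathlib

/-!
Write `e = g(x̃) - x₀` and `d = x̃ - x₀ = σU`, so that `e² = (e - d)² + 2 d e - d²`. Taking
expectations, `E[d²] = σ²`, and Stein's lemma `E[d e] = σ² E[g'(x̃)]` turns the cross term into the
divergence term. Stein's lemma is Gaussian integration by parts: the Gaussian density `φ` satisfies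
`φ' = -((x - x₀) / σ²) φ`, and the derivative of the integrable function `φ (g - x₀)` integrates to
zero over `ℝ`.
-/

open MeasureTheory ProbabilityTheory
open scoped NNReal

namespace ProbabilityTheory

lemma HasLaw.integrable_comp_iff {Ω 𝓧 E : Type*} {mΩ : MeasurableSpace Ω}
    {m𝓧 : MeasurableSpace 𝓧} [NormedAddCommGroup E] {P : Measure Ω} {μ : Measure 𝓧} {X : Ω → 𝓧}
    (hX : HasLaw X μ P) {f : 𝓧 → E}
    (hf : AEStronglyMeasurable f μ) :
    Integrable (fun ω => f (X ω)) P ↔ Integrable f μ := by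
  rw [← hX.map_eq] at hf ⊢
  exact (integrable_map_measure hf hX.aemeasurable).symm

variable {m : ℝ} {v : ℝ≥0}

lemma hasDerivAt_gaussianPDFReal (m : ℝ) (v : ℝ≥0) (x : ℝ) :
    HasDerivAt (gaussianPDFReal m v) (-((x - m) / v) * gaussianPDFReal m v x) x := by
  have hexponent : HasDerivAt (fun y => -(y - m) ^ 2 / (2 * v)) (-(2 * (x - m)) / (2 * v)) x := by
    simpa using (((hasDerivAt_id x).sub_const m).pow 2).neg.div_const (2 * (v : ℝ))
  refine (hexponent.exp.const_mul (Real.sqrt (2 * Real.pi * v))⁻¹).congr_deriv ?_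
  rw [gaussianPDFReal]
  ring

lemma integrable_gaussianReal_iff (hv : v ≠ 0) {f : ℝ → ℝ} :
    Integrable f (gaussianReal m v) ↔ Integrable (fun x => gaussianPDFReal m v x * f x) := by
  rw [gaussianReal_of_var_ne_zero m hv,
    integrable_withDensity_iff_integrable_smul' (measurable_gaussianPDF m v)
      (ae_of_all _ fun _ => gaussianPDF_lt_top)]
  simp [toReal_gaussianPDF]

lemma integral_sub_mul_gaussianReal_eq_mul_integral_deriv {f f' : ℝ → ℝ}
    (hf : ∀ x, HasDerivAt f (f' x) x)
    (hfi : Integrable f (gaussianReal m v)) (hf'i : Integrable f' (gaussianReal m v))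
    (hxf : Integrable (fun x => (x - m) * f x) (gaussianReal m v)) :
    ∫ x, (x - m) * f x ∂gaussianReal m v = v * ∫ x, f' x ∂gaussianReal m v := by
  rcases eq_or_ne v 0 with rfl | hv
  · simp [gaussianReal_zero_var]
  rw [integrable_gaussianReal_iff hv] at hfi hf'i hxf
  have hderiv (x : ℝ) : HasDerivAt (fun x => gaussianPDFReal m v x * f x)
      (gaussianPDFReal m v x * f' x
        - (v : ℝ)⁻¹ * (gaussianPDFReal m v x * ((x - m) * f x))) x :=
    ((hasDerivAt_gaussianPDFReal m v x).mul (hf x)).congr_deriv (by ring)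
  have hzero := integral_eq_zero_of_hasDerivAt_of_integrable hderiv
    (hf'i.sub (hxf.const_mul _)) hfi
  rw [integral_sub hf'i (hxf.const_mul _), integral_const_mul, sub_eq_zero] at hzero
  rw [integral_gaussianReal_eq_integral_smul hv, integral_gaussianReal_eq_integral_smul hv]
  simp only [smul_eq_mul, hzero]
  field_simp [show (v : ℝ) ≠ 0 by exact_mod_cast hv]

lemma integral_sub_mean_sq_gaussianReal :
    ∫ x, (x - m) ^ 2 ∂gaussianReal m v = v := by
  simpa [variance_eq_integral measurable_id'.aemeasurable] using
    variance_fun_id_gaussianReal (μ := m) (v := v)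

lemma integrable_sub_mean_sq_gaussianReal :
    Integrable (fun x => (x - m) ^ 2) (gaussianReal m v) :=
  ((memLp_id_gaussianReal 2).sub (memLp_const m)).integrable_sq

theorem sure_gaussianReal {g g' : ℝ → ℝ}
    (hg : ∀ x, HasDerivAt g (g' x) x) (hg' : Integrable g' (gaussianReal m v))
    (h_risk : Integrable (fun x => (g x - m) ^ 2) (gaussianReal m v))
    (h_residual : Integrable (fun x => (g x - x) ^ 2) (gaussianReal m v)) :
    ∫ x, (g x - m) ^ 2 ∂gaussianReal m v
      = ∫ x, (g x - x) ^ 2 ∂gaussianReal m v - v + 2 * v * ∫ x, g' x ∂gaussianReal m v := by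
  have hcont : Continuous g := continuous_iff_continuousAt.2 fun x => (hg x).continuousAt
  have h_error : Integrable (fun x => g x - m) (gaussianReal m v) :=
    ((memLp_two_iff_integrable_sq (hcont.sub continuous_const).aestronglyMeasurable).2
      h_risk).integrable one_le_two
  have h_cross : Integrable (fun x => (x - m) * (g x - m)) (gaussianReal m v) :=
    (((h_risk.sub h_residual).add integrable_sub_mean_sq_gaussianReal).div_const 2).congr
      (ae_of_all _ fun x => by simp only [Pi.add_apply, Pi.sub_apply]; ring)
  have stein := integral_sub_mul_gaussianReal_eq_mul_integral_deriv
    (fun x => (hg x).sub_const m) h_error hg' h_cross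
  have h_rest :
      Integrable (fun x => 2 * ((x - m) * (g x - m)) - (x - m) ^ 2) (gaussianReal m v) :=
    (h_cross.const_mul 2).sub integrable_sub_mean_sq_gaussianReal
  calc ∫ x, (g x - m) ^ 2 ∂gaussianReal m v
      = ∫ x, ((g x - x) ^ 2 + (2 * ((x - m) * (g x - m)) - (x - m) ^ 2)) ∂gaussianReal m v :=
        integral_congr_ae (ae_of_all _ fun x => by ring)
    _ = ∫ x, (g x - x) ^ 2 ∂gaussianReal m v
          + (2 * ∫ x, (x - m) * (g x - m) ∂gaussianReal m v
            - ∫ x, (x - m) ^ 2 ∂gaussianReal m v) := by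
        rw [integral_add h_residual h_rest,
          integral_sub (h_cross.const_mul 2) integrable_sub_mean_sq_gaussianReal,
          integral_const_mul]
    _ = _ := by rw [stein, integral_sub_mean_sq_gaussianReal]; ring

end ProbabilityTheory

theorem scalar_sure_general
    {Ω : Type*} [MeasureSpace Ω] (μ : Measure Ω) [IsProbabilityMeasure μ]
    (U : Ω → ℝ)
    (hUlaw : Measure.map U μ = gaussianReal 0 1)
    (x₀ σ : ℝ)
    (g g' : ℝ → ℝ) (hg : ∀ x, HasDerivAt g (g' x) x)
    (hint_g' : Integrable (fun ω => g' (x₀ + σ * U ω)) μ)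
    (hint1 : Integrable (fun ω => (g (x₀ + σ * U ω) - x₀) ^ 2) μ)
    (hint2 : Integrable (fun ω => (g (x₀ + σ * U ω) - (x₀ + σ * U ω)) ^ 2) μ) :
    ∫ ω, (g (x₀ + σ * U ω) - x₀) ^ 2 ∂μ
      = ∫ ω, (g (x₀ + σ * U ω) - (x₀ + σ * U ω)) ^ 2 ∂μ
        - σ ^ 2 + 2 * σ ^ 2 * ∫ ω, g' (x₀ + σ * U ω) ∂μ := by
  have hU : HasLaw U (gaussianReal 0 1) μ :=
    ⟨.of_map_ne_zero (hUlaw ▸ IsProbabilityMeasure.ne_zero _), hUlaw⟩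
  have hX := gaussianReal_const_add (gaussianReal_const_mul hU σ) x₀
  simp only [mul_zero, zero_add, mul_one] at hX
  have hg_meas : Measurable g :=
    (continuous_iff_continuousAt.2 fun x => (hg x).continuousAt).measurable
  have hg'_meas : Measurable g' := by
    rw [show g' = deriv g from funext fun x => (hg x).deriv.symm]
    exact measurable_deriv g
  have key := sure_gaussianReal hg
    ((hX.integrable_comp_iff (by fun_prop)).1 hint_g')
    ((hX.integrable_comp_iff (by fun_prop)).1 hint1)
    ((hX.integrable_comp_iff (by fun_prop)).1 hint2)
  rw [← hX.integral_comp (by fun_prop), ← hX.integral_comp (by fun_prop),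
    ← hX.integral_comp (by fun_prop)] at key
  simpa only [Function.comp_def, NNReal.coe_mk] using key

/-- Scalar Stein unbiased risk estimate (SURE) for a differentiable denoiser g
applied to x̃ = x₀ + σU with U standard Gaussian. -/
theorem scalar_sure
    {Ω : Type*} [MeasureSpace Ω] (μ : Measure Ω) [IsProbabilityMeasure μ]
    (U : Ω → ℝ) (hU : Measurable U)
    (hUlaw : Measure.map U μ = gaussianReal 0 1)
    (x₀ σ : ℝ) (hσ : 0 < σ)
    (g g' : ℝ → ℝ) (hg : ∀ x, HasDerivAt g (g' x) x)
    (hint_g' : Integrable (fun ω => g' (x₀ + σ * U ω)) μ)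
    (hint1 : Integrable (fun ω => (g (x₀ + σ * U ω) - x₀) ^ 2) μ)
    (hint2 : Integrable (fun ω => (g (x₀ + σ * U ω) - (x₀ + σ * U ω)) ^ 2) μ) :
    ∫ ω, (g (x₀ + σ * U ω) - x₀) ^ 2 ∂μ
      = ∫ ω, (g (x₀ + σ * U ω) - (x₀ + σ * U ω)) ^ 2 ∂μ
        - σ ^ 2 + 2 * σ ^ 2 * ∫ ω, g' (x₀ + σ * U ω) ∂μ :=
  scalar_sure_general μ U hUlaw x₀ σ g g' hg hint_g' hint1 hint2
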